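/- Suppose c₁ = 1/2 and the function Υ : ℝ → ℝ satisfies (1/2)·sinc(ν/2)·Υ(ν) = b̄₁(ν) and cos(ν/2)·Υ(ν) = b₁(ν) for ν ∈ {0, hω}. Then for every g : ℝ^d → ℝ^d and every (q,p) ∈ ℝ^d × ℝ^d, the one-stage explicit ERKN integrator coincides with the Strang splitting: Φ_h(q,p) = Φ_{h/2,L}(Φ_{h,NL}(Φ_{h/2,L}(q,p))). -/

import Mathlib

noncomputable section

/-- The (unnormalized) sinc function: `sinc x = sin x / x` for `x ≠ 0`, `sinc 0 = 1`. -/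
def rsinc (x : ℝ) : ℝ := if x = 0 then 1 else Real.sin x / x

/-- Real coordinate space `ℝ^d` with the Euclidean norm. -/
abbrev Vec (d : ℕ) : Type := EuclideanSpace ℝ (Fin d)

/-- Block-diagonal scalar operator: multiplies the first `d₁` coordinates by `a`
and the remaining `d₂` coordinates by `b`.  This realizes `f(hΩ)` for
`Ω = diag(0·I_{d₁}, ω·I_{d₂})`, with `a = f 0` and `b = f (hω)`. -/
def bop (d₁ d₂ : ℕ) (a b : ℝ) (v : Vec (d₁ + d₂)) : Vec (d₁ + d₂) :=
  WithLp.toLp 2 (fun i : Fin (d₁ + d₂) => (if (i : ℕ) < d₁ then a else b) * v i)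

/-- One-stage explicit ERKN integrator `Φ_h` for `q'' + Ω²q = g(q)`:
`Q = cos(c₁hΩ)q + c₁h·sinc(c₁hΩ)p`,
`q⁺ = cos(hΩ)q + h·sinc(hΩ)p + h²·b̄₁(hΩ)g(Q)`,
`p⁺ = −hΩ²·sinc(hΩ)q + cos(hΩ)p + h·b₁(hΩ)g(Q)`. -/
def erkn (d₁ d₂ : ℕ) (h ω c₁ : ℝ) (bbar b₁ : ℝ → ℝ)
    (g : Vec (d₁ + d₂) → Vec (d₁ + d₂)) (x : Vec (d₁ + d₂) × Vec (d₁ + d₂)) :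
    Vec (d₁ + d₂) × Vec (d₁ + d₂) :=
  let q := x.1
  let p := x.2
  let Q := bop d₁ d₂ (Real.cos (c₁ * (h * 0))) (Real.cos (c₁ * (h * ω))) q
         + bop d₁ d₂ (c₁ * h * rsinc (c₁ * (h * 0))) (c₁ * h * rsinc (c₁ * (h * ω))) p
  ( bop d₁ d₂ (Real.cos (h * 0)) (Real.cos (h * ω)) q
    + bop d₁ d₂ (h * rsinc (h * 0)) (h * rsinc (h * ω)) p
    + bop d₁ d₂ (h ^ 2 * bbar (h * 0)) (h ^ 2 * bbar (h * ω)) (g Q),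
    bop d₁ d₂ (-(h * 0 ^ 2 * rsinc (h * 0))) (-(h * ω ^ 2 * rsinc (h * ω))) q
    + bop d₁ d₂ (Real.cos (h * 0)) (Real.cos (h * ω)) p
    + bop d₁ d₂ (h * b₁ (h * 0)) (h * b₁ (h * ω)) (g Q) )

/-- Exact time-`t` flow `Φ_{t,L}` of the linear equation `q̇ = p`, `ṗ = −Ω²q`. -/
def phiL (d₁ d₂ : ℕ) (ω t : ℝ) (x : Vec (d₁ + d₂) × Vec (d₁ + d₂)) :
    Vec (d₁ + d₂) × Vec (d₁ + d₂) :=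
  ( bop d₁ d₂ (Real.cos (t * 0)) (Real.cos (t * ω)) x.1
    + bop d₁ d₂ (t * rsinc (t * 0)) (t * rsinc (t * ω)) x.2,
    bop d₁ d₂ (-(t * 0 ^ 2 * rsinc (t * 0))) (-(t * ω ^ 2 * rsinc (t * ω))) x.1
    + bop d₁ d₂ (Real.cos (t * 0)) (Real.cos (t * ω)) x.2 )

/-- Time-`t` flow `Φ_{t,NL}` of the nonlinear equation `q̇ = 0`, `ṗ = Υ(hΩ)g(q)`. -/
def phiNL (d₁ d₂ : ℕ) (h ω : ℝ) (Υ : ℝ → ℝ) (g : Vec (d₁ + d₂) → Vec (d₁ + d₂))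
    (t : ℝ) (x : Vec (d₁ + d₂) × Vec (d₁ + d₂)) :
    Vec (d₁ + d₂) × Vec (d₁ + d₂) :=
  (x.1, x.2 + bop d₁ d₂ (t * Υ (h * 0)) (t * Υ (h * ω)) (g x.1))

/-!
Because `Ω` is diagonal, every map involved acts coordinatewise, and on coordinate `i` it acts on
the phase plane of a single mode with frequency `w = 0` (if `i < d₁`) or `w = ω`. The ERKN stage
value `Q` is exactly the position after the first linear half-step, so both sides evaluate `g` at
the same point. On one mode, the half-step – kick – half-step composition reduces to the ERKN
step through the double-angle formulas `cos 2x = cos² x - sin² x`, `sinc 2x = sinc x · cos x`, and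
`x · sinc x = sin x`, which is where the conditions `b̄₁ = ½ sinc(ν/2) Υ`, `b₁ = cos(ν/2) Υ` come from.
-/

open Real

theorem mul_rsinc (x : ℝ) : x * rsinc x = sin x := by
  by_cases hx : x = 0
  · simp [hx]
  · rw [rsinc, if_neg hx, mul_div_cancel₀ _ hx]

theorem rsinc_two_mul (x : ℝ) : rsinc (2 * x) = rsinc x * cos x := by
  by_cases hx : x = 0
  · simp [rsinc, hx]
  · have h2x : 2 * x ≠ 0 := mul_ne_zero two_ne_zero hx
    rw [rsinc, if_neg h2x, rsinc, if_neg hx, sin_two_mul]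
    field_simp

def modeFlow (w t : ℝ) (z : ℝ × ℝ) : ℝ × ℝ :=
  (cos (t * w) * z.1 + t * rsinc (t * w) * z.2,
    -(t * w ^ 2 * rsinc (t * w)) * z.1 + cos (t * w) * z.2)

theorem modeFlow_half_kick_half (h w U G : ℝ) (z : ℝ × ℝ) :
    modeFlow w (h / 2) ((modeFlow w (h / 2) z).1, (modeFlow w (h / 2) z).2 + h * U * G)
      = (cos (h * w) * z.1 + h * rsinc (h * w) * z.2 + h ^ 2 * (1 / 2 * rsinc (h * w / 2) * U) * G,
        -(h * w ^ 2 * rsinc (h * w)) * z.1 + cos (h * w) * z.2 + h * (cos (h * w / 2) * U) * G) := by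
  have hS : w * (h / 2 * rsinc (h / 2 * w)) = sin (h / 2 * w) := by rw [← mul_rsinc]; ring
  have hdouble : h * w = 2 * (h / 2 * w) := by ring
  have hcos : cos (h * w) = cos (h / 2 * w) ^ 2 - sin (h / 2 * w) ^ 2 := by
    rw [hdouble, cos_two_mul, ← sin_sq_add_cos_sq (h / 2 * w)]; ring
  have hsinc : rsinc (h * w) = rsinc (h / 2 * w) * cos (h / 2 * w) := by
    rw [hdouble, rsinc_two_mul]
  have hhalf : h * w / 2 = h / 2 * w := by ring
  simp only [modeFlow, hcos, hsinc, hhalf, Prod.mk.injEq]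
  constructor
  · linear_combination (-(w * (h / 2 * rsinc (h / 2 * w)) + sin (h / 2 * w)) * z.1) * hS
  · linear_combination (-(w * (h / 2 * rsinc (h / 2 * w)) + sin (h / 2 * w)) * z.2) * hS

def blockFreq (d₁ : ℕ) {d₂ : ℕ} (ω : ℝ) (i : Fin (d₁ + d₂)) : ℝ := if (i : ℕ) < d₁ then 0 else ω

def coord {n : ℕ} (i : Fin n) (x : Vec n × Vec n) : ℝ × ℝ := (x.1 i, x.2 i)

theorem coord_ext {n : ℕ} {x y : Vec n × Vec n} (hxy : ∀ i, coord i x = coord i y) : x = y := by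
  ext i
  · exact congrArg Prod.fst (hxy i)
  · exact congrArg Prod.snd (hxy i)

section Coordinates

variable {d₁ d₂ : ℕ} (i : Fin (d₁ + d₂))

theorem bop_apply (a b : ℝ) (v : Vec (d₁ + d₂)) :
    bop d₁ d₂ a b v i = (if (i : ℕ) < d₁ then a else b) * v i := rfl

theorem coord_phiL (ω t : ℝ) (x : Vec (d₁ + d₂) × Vec (d₁ + d₂)) :
    coord i (phiL d₁ d₂ ω t x) = modeFlow (blockFreq d₁ ω i) t (coord i x) := by
  by_cases hi : (i : ℕ) < d₁ <;> simp [coord, phiL, modeFlow, bop_apply, blockFreq, hi]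

theorem coord_phiNL (h ω t : ℝ) (Υ : ℝ → ℝ) (g : Vec (d₁ + d₂) → Vec (d₁ + d₂))
    (x : Vec (d₁ + d₂) × Vec (d₁ + d₂)) :
    coord i (phiNL d₁ d₂ h ω Υ g t x)
      = ((coord i x).1, (coord i x).2 + t * Υ (h * blockFreq d₁ ω i) * g x.1 i) := by
  by_cases hi : (i : ℕ) < d₁ <;> simp [coord, phiNL, bop_apply, blockFreq, hi, mul_assoc]

theorem coord_erkn_half (h ω : ℝ) (bbar b₁ : ℝ → ℝ) (g : Vec (d₁ + d₂) → Vec (d₁ + d₂))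
    (x : Vec (d₁ + d₂) × Vec (d₁ + d₂)) :
    coord i (erkn d₁ d₂ h ω (1 / 2) bbar b₁ g x)
      = (cos (h * blockFreq d₁ ω i) * x.1 i + h * rsinc (h * blockFreq d₁ ω i) * x.2 i
            + h ^ 2 * bbar (h * blockFreq d₁ ω i) * g (phiL d₁ d₂ ω (h / 2) x).1 i,
          -(h * blockFreq d₁ ω i ^ 2 * rsinc (h * blockFreq d₁ ω i)) * x.1 i
            + cos (h * blockFreq d₁ ω i) * x.2 i
            + h * b₁ (h * blockFreq d₁ ω i) * g (phiL d₁ d₂ ω (h / 2) x).1 i) := by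
  have hstage : (1 : ℝ) / 2 * h = h / 2 := by ring
  have hQ : bop d₁ d₂ (cos (1 / 2 * (h * 0))) (cos (1 / 2 * (h * ω))) x.1
      + bop d₁ d₂ (1 / 2 * h * rsinc (1 / 2 * (h * 0))) (1 / 2 * h * rsinc (1 / 2 * (h * ω))) x.2
      = (phiL d₁ d₂ ω (h / 2) x).1 := by
    simp only [phiL, ← mul_assoc, hstage]
  simp only [erkn, hQ]
  by_cases hi : (i : ℕ) < d₁ <;> simp [coord, bop_apply, blockFreq, hi]

end Coordinates

theorem erkn_eq_strang_general (d₁ d₂ : ℕ) (h ω : ℝ)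
    (bbar b₁ Υ : ℝ → ℝ)
    (hΥ₁ : ∀ ν ∈ ({0, h * ω} : Set ℝ), (1/2) * rsinc (ν / 2) * Υ ν = bbar ν)
    (hΥ₂ : ∀ ν ∈ ({0, h * ω} : Set ℝ), Real.cos (ν / 2) * Υ ν = b₁ ν)
    (g : Vec (d₁ + d₂) → Vec (d₁ + d₂)) (q p : Vec (d₁ + d₂)) :
    erkn d₁ d₂ h ω (1/2) bbar b₁ g (q, p)
      = phiL d₁ d₂ ω (h/2) (phiNL d₁ d₂ h ω Υ g h (phiL d₁ d₂ ω (h/2) (q, p))) := by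
  refine coord_ext fun i => ?_
  have hν : h * blockFreq d₁ ω i ∈ ({0, h * ω} : Set ℝ) := by
    unfold blockFreq; split_ifs <;> simp
  rw [coord_erkn_half, ← hΥ₁ _ hν, ← hΥ₂ _ hν, coord_phiL, coord_phiNL, coord_phiL,
    modeFlow_half_kick_half]
  rfl

/-- If `c₁ = 1/2` and `Υ` satisfies `(1/2)sinc(ν/2)Υ(ν) = b̄₁(ν)`,
`cos(ν/2)Υ(ν) = b₁(ν)` for `ν ∈ {0, hω}`, then the ERKN integrator coincides with
the Strang splitting `Φ_{h/2,L} ∘ Φ_{h,NL} ∘ Φ_{h/2,L}`. -/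
theorem erkn_eq_strang (d₁ d₂ : ℕ) (h ω : ℝ) (hh : 0 < h) (hω : 0 < ω)
    (bbar b₁ Υ : ℝ → ℝ)
    (hΥ₁ : ∀ ν ∈ ({0, h * ω} : Set ℝ), (1/2) * rsinc (ν / 2) * Υ ν = bbar ν)
    (hΥ₂ : ∀ ν ∈ ({0, h * ω} : Set ℝ), Real.cos (ν / 2) * Υ ν = b₁ ν)
    (g : Vec (d₁ + d₂) → Vec (d₁ + d₂)) (q p : Vec (d₁ + d₂)) :
    erkn d₁ d₂ h ω (1/2) bbar b₁ g (q, p)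
      = phiL d₁ d₂ ω (h/2) (phiNL d₁ d₂ h ω Υ g h (phiL d₁ d₂ ω (h/2) (q, p))) :=
  erkn_eq_strang_general d₁ d₂ h ω bbar b₁ Υ hΥ₁ hΥ₂ g q p
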